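/- Let G be a signed graph whose underlying simple graph G̃⁺ = G⁺∪G⁻ is complete. If G has no induced subgraph isomorphic to an unbalanced cycle of length three or more (condition (II)) and the graph of double edges G̃⁻ = G⁺∩G⁻ is a threshold graph, then G has a link elimination ordering. -/

import Mathlib

open scoped Classical

universe u v

/-! ## Signed graphs -/

/-- A signed graph: a pair of simple graphs (positive and negative parts) on a common
vertex set. -/
structure SignedGraph (V : Type u) where
  pos : SimpleGraph V
  neg : SimpleGraph V

namespace SignedGraph

variable {V : Type u}

/-- Adjacency by an edge of a given sign (`true` = negative edge, `false` = positive edge). -/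
def EdgeAdj (G : SignedGraph V) (s : Bool) (u v : V) : Prop :=
  cond s (G.neg.Adj u v) (G.pos.Adj u v)

/-- A cycle of a signed graph: distinct vertices `vert 0, …, vert (n-1)` (`n ≥ 3`) with an
edge of sign `sgn i` between `vert i` and `vert ((i+1) % n)` for each `i < n`. -/
structure Cycle (G : SignedGraph V) where
  n : ℕ
  three_le : 3 ≤ n
  vert : ℕ → V
  inj : ∀ i j, i < n → j < n → vert i = vert j → i = j
  sgn : ℕ → Bool
  adj : ∀ i, i < n → G.EdgeAdj (sgn i) (vert i) (vert ((i + 1) % n))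

/-- A cycle is balanced if it uses an even number of negative edges. -/
def Cycle.Balanced {G : SignedGraph V} (C : G.Cycle) : Prop :=
  Even (((Finset.range C.n).filter fun i => C.sgn i = true).card)

/-- A chord of a cycle: an edge of `G` joining two non-consecutive vertices of the cycle. -/
def Cycle.IsChord {G : SignedGraph V} (C : G.Cycle) (i j : ℕ) : Prop :=
  i < C.n ∧ j < C.n ∧ i ≠ j ∧ j ≠ (i + 1) % C.n ∧ i ≠ (j + 1) % C.n ∧
    (G.pos.Adj (C.vert i) (C.vert j) ∨ G.neg.Adj (C.vert i) (C.vert j))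

/-- The chord of sign `s` between positions `i < j` of the cycle `C` separates `C` into two
balanced cycles (for a balanced cycle it suffices that one of the two pieces is balanced). -/
def Cycle.BalancedChordAt {G : SignedGraph V} (C : G.Cycle) (i j : ℕ) (s : Bool) : Prop :=
  i < j ∧ C.IsChord i j ∧ G.EdgeAdj s (C.vert i) (C.vert j) ∧
    Even ((((Finset.Ico i j).filter fun k => C.sgn k = true).card) + cond s 1 0) ∧
    Even ((((Finset.range C.n \ Finset.Ico i j).filter fun k => C.sgn k = true).card)
      + cond s 1 0)

/-- The cycle has a balanced chord. -/
def Cycle.HasBalancedChord {G : SignedGraph V} (C : G.Cycle) : Prop :=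
  ∃ i j s, C.BalancedChordAt i j s

/-- Condition (I): a signed graph is balanced chordal if every balanced cycle of length at
least four has a balanced chord. -/
def BalancedChordal (G : SignedGraph V) : Prop :=
  ∀ C : G.Cycle, 4 ≤ C.n → C.Balanced → C.HasBalancedChord

/-- The cycle `C` is an induced subgraph of `G`: the only edges of `G` among its vertices are
the edges of the cycle, each single, with the sign it has in the cycle. -/
def Cycle.IsInduced {G : SignedGraph V} (C : G.Cycle) : Prop :=
  ∀ i j, i < C.n → j < C.n → ∀ s : Bool,
    (G.EdgeAdj s (C.vert i) (C.vert j) ↔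
      ((j = (i + 1) % C.n ∧ C.sgn i = s) ∨ (i = (j + 1) % C.n ∧ C.sgn j = s)))

/-- Condition (II): no induced subgraph of `G` is an unbalanced cycle (of length `≥ 3`). -/
def NoInducedUnbalancedCycle (G : SignedGraph V) : Prop :=
  ¬ ∃ C : G.Cycle, C.IsInduced ∧ ¬ C.Balanced

/-- Switching a signed graph by `ν : V → Bool`. -/
def switch (G : SignedGraph V) (ν : V → Bool) : SignedGraph V where
  pos := SimpleGraph.fromRel fun u w => if ν u = ν w then G.pos.Adj u w else G.neg.Adj u w
  neg := SimpleGraph.fromRel fun u w => if ν u = ν w then G.neg.Adj u w else G.pos.Adj u w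

/-- `G` contains an induced copy of the signed graph `H`. -/
def HasInducedCopy {W : Type v} (G : SignedGraph V) (H : SignedGraph W) : Prop :=
  ∃ f : W → V, Function.Injective f ∧
    (∀ a b : W, G.pos.Adj (f a) (f b) ↔ H.pos.Adj a b) ∧
    (∀ a b : W, G.neg.Adj (f a) (f b) ↔ H.neg.Adj a b)

end SignedGraph

/-- The obstruction graph `G₀` of Figure 1: vertices `0,1,2,3` (= `1,2,3,4` in the paper),
double edges `{0,1}, {2,3}`, positive single edges `{0,3}, {1,3}, {1,2}`, negative single
edge `{0,2}`. -/
def obstruction : SignedGraph (Fin 4) where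
  pos := SimpleGraph.fromRel fun a b =>
    (a = 0 ∧ b = 1) ∨ (a = 2 ∧ b = 3) ∨ (a = 0 ∧ b = 3) ∨ (a = 1 ∧ b = 3) ∨ (a = 1 ∧ b = 2)
  neg := SimpleGraph.fromRel fun a b =>
    (a = 0 ∧ b = 1) ∨ (a = 2 ∧ b = 3) ∨ (a = 0 ∧ b = 2)

namespace SignedGraph

variable {V : Type u}

/-- Condition (III): no induced subgraph of `G` is switching equivalent to the obstruction
graph `G₀`. -/
def NoInducedObstruction (G : SignedGraph V) : Prop :=
  ¬ ∃ ν : Fin 4 → Bool, G.HasInducedCopy (obstruction.switch ν)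

/-- The signed graph `G̃ = (G⁺ ∪ G⁻, G⁺ ∩ G⁻)`. -/
def tilde (G : SignedGraph V) : SignedGraph V :=
  ⟨G.pos ⊔ G.neg, G.pos ⊓ G.neg⟩

/-- The induced subgraph of a signed graph on a set of vertices. -/
def induce (G : SignedGraph V) (W : Set V) : SignedGraph W :=
  ⟨SimpleGraph.induce W G.pos, SimpleGraph.induce W G.neg⟩

/-- A vertex `v` is link simplicial: for any two edges at `v` with distinct other endpoints
there is an edge making a balanced triangle with them. -/
def LinkSimplicial (G : SignedGraph V) (v : V) : Prop :=
  ∀ (u u' : V) (s s' : Bool), u ≠ u' → G.EdgeAdj s v u → G.EdgeAdj s' v u' →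
    ∃ s'' : Bool, G.EdgeAdj s'' u u' ∧
      Even ((cond s 1 0 + cond s' 1 0 + cond s'' 1 0 : ℕ))

/-- A link elimination ordering: an enumeration of the vertices such that each vertex is
link simplicial in the induced subgraph on it and its predecessors. -/
def HasLinkElimOrdering (G : SignedGraph V) [Fintype V] : Prop :=
  ∃ e : Fin (Fintype.card V) ≃ V, ∀ i : Fin (Fintype.card V),
    (G.induce {w : V | ∃ j, j ≤ i ∧ e j = w}).LinkSimplicial ⟨e i, ⟨i, le_refl i, rfl⟩⟩

/-- A complete signed graph `K±`: any two distinct vertices are joined by a double edge. -/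
def IsCompleteSigned (G : SignedGraph V) : Prop :=
  ∀ u v : V, u ≠ v → G.pos.Adj u v ∧ G.neg.Adj u v

end SignedGraph

/-- A threshold graph: it can be built from the one-vertex graph (more generally from the
empty graph) by successively adding isolated or dominating vertices; equivalently there is
an ordering of the vertices in which each vertex is isolated or dominating among its
predecessors. -/
def SimpleGraph.IsThresholdGraph {V : Type u} [Fintype V] (G : SimpleGraph V) : Prop :=
  ∃ e : Fin (Fintype.card V) ≃ V, ∀ i : Fin (Fintype.card V),
    (∀ j, j < i → ¬ G.Adj (e i) (e j)) ∨ (∀ j, j < i → G.Adj (e i) (e j))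

/-- A simple graph is chordal if every cycle of length at least four has a chord. -/
def SimpleGraph.IsChordalGraph {V : Type u} (G : SimpleGraph V) : Prop :=
  ∀ n : ℕ, 4 ≤ n → ∀ v : ℕ → V,
    (∀ i j, i < n → j < n → v i = v j → i = j) →
    (∀ i, i < n → G.Adj (v i) (v ((i + 1) % n))) →
    ∃ i j, i < j ∧ j < n ∧ j ≠ i + 1 ∧ ¬(i = 0 ∧ j = n - 1) ∧ G.Adj (v i) (v j)

/-! ## Hyperplane arrangements -/

noncomputable section Arrangements

/-- The signed-graphic arrangement `A(G)` in `K^V`, given by its defining linear forms: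
`x i` for each vertex, `x i - x j` for positive edges and `x i + x j` for negative edges. -/
def signedArr (K : Type u) [Field K] {V : Type v} [Fintype V] (G : SignedGraph V) :
    Finset ((V → K) →ₗ[K] K) :=
  (Finset.univ.image fun i : V => LinearMap.proj i)
    ∪ ((Finset.univ.filter fun p : V × V => G.pos.Adj p.1 p.2).image fun p =>
        (LinearMap.proj p.1 : (V → K) →ₗ[K] K) - LinearMap.proj p.2)
    ∪ ((Finset.univ.filter fun p : V × V => G.neg.Adj p.1 p.2).image fun p =>
        (LinearMap.proj p.1 : (V → K) →ₗ[K] K) + LinearMap.proj p.2)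

/-- The linear polynomial in `K[x_i : i ∈ V]` corresponding to a linear form on `K^V`. -/
def linToPoly (K : Type u) [Field K] {V : Type v} [Fintype V] (φ : (V → K) →ₗ[K] K) :
    MvPolynomial V K :=
  ∑ i : V, MvPolynomial.C (φ (Pi.single i 1)) * MvPolynomial.X i

/-- The module `D(A)` of logarithmic derivations of an arrangement given by linear forms. -/
def logDerModule (K : Type u) [Field K] {V : Type v} [Fintype V]
    (A : Finset ((V → K) →ₗ[K] K)) :
    Submodule (MvPolynomial V K) (Derivation K (MvPolynomial V K) (MvPolynomial V K)) where
  carrier := {θ | ∀ φ ∈ A, θ (linToPoly K φ) ∈ Ideal.span {linToPoly K φ}}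
  add_mem' := by
    intro θ η hθ hη φ hφ
    simpa using Ideal.add_mem _ (hθ φ hφ) (hη φ hφ)
  zero_mem' := by
    intro φ hφ
    simp
  smul_mem' := by
    intro c θ hθ φ hφ
    simpa [smul_eq_mul] using Ideal.mul_mem_left _ c (hθ φ hφ)

/-- An arrangement is free if its module of logarithmic derivations is free. -/
def ArrIsFree (K : Type u) [Field K] {V : Type v} [Fintype V]
    (A : Finset ((V → K) →ₗ[K] K)) : Prop :=
  Module.Free (MvPolynomial V K) (logDerModule K A)

/-- The intersection lattice: all intersections of subfamilies of a finite family of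
subspaces (the empty intersection being the whole space). -/
def interLattice (K : Type u) [Field K] {M : Type v} [AddCommGroup M] [Module K M]
    (H : Finset (Submodule K M)) : Finset (Submodule K M) :=
  H.powerset.image fun B => B.inf id

/-- The one-variable Möbius function of the intersection lattice `L` (ordered by reverse
inclusion): `μ(whole space) = 1` and `μ(X) = -∑_{Y < X} μ(Y)`. -/
def mobiusFn (K : Type u) [Field K] {M : Type v} [AddCommGroup M] [Module K M]
    [FiniteDimensional K M] (L : Finset (Submodule K M)) (X : Submodule K M) : ℤ :=
  if X = ⊤ then 1
  else - ∑ Y ∈ (L.filter fun Y => X < Y).attach, mobiusFn K L Y.1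
termination_by Module.finrank K M - Module.finrank K X
decreasing_by
  have h1 : X < Y.1 := (Finset.mem_filter.mp Y.2).2
  have h2 : Module.finrank K X < Module.finrank K Y.1 :=
    Submodule.finrank_lt_finrank_of_lt h1
  have h3 : Module.finrank K (Y.1 : Submodule K M) ≤ Module.finrank K M :=
    Submodule.finrank_le Y.1
  omega

/-- The characteristic polynomial `χ(A,t) = ∑_{X ∈ L(A)} μ(X) t^{dim X}` of an arrangement
given by its defining linear forms. -/
def arrCharPoly (K : Type u) [Field K] {M : Type v} [AddCommGroup M] [Module K M]
    [FiniteDimensional K M] (A : Finset (M →ₗ[K] K)) : Polynomial ℤ :=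
  ∑ X ∈ interLattice K (A.image LinearMap.ker),
    Polynomial.C (mobiusFn K (interLattice K (A.image LinearMap.ker)) X) *
      Polynomial.X ^ Module.finrank K X

/-- The restriction `A^H` of the arrangement `A` to the hyperplane `H = ker φ`, given by
the restrictions of the defining forms of the hyperplanes other than `H`. -/
def restrArr (K : Type u) [Field K] {M : Type v} [AddCommGroup M] [Module K M]
    (A : Finset (M →ₗ[K] K)) (φ : M →ₗ[K] K) : Finset (↥(LinearMap.ker φ) →ₗ[K] K) :=
  (A.filter fun ψ => LinearMap.ker ψ ≠ LinearMap.ker φ).image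
    fun ψ => ψ ∘ₗ (LinearMap.ker φ).subtype

/-- Auxiliary fuelled definition of divisional freeness. -/
def DivFreeAux (K : Type u) [Field K] (n : ℕ) (M : Type v) [AddCommGroup M] [Module K M]
    [FiniteDimensional K M] (A : Finset (M →ₗ[K] K)) : Prop :=
  match n with
  | 0 => A = ∅
  | Nat.succ m => A = ∅ ∨ ∃ φ ∈ A, φ ≠ 0 ∧
      DivFreeAux K m ↥(LinearMap.ker φ) (restrArr K A φ) ∧
      arrCharPoly K (restrArr K A φ) ∣ arrCharPoly K A

/-- Divisional freeness: the empty arrangement is divisionally free, and `A` is divisionally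
free if some hyperplane `H ∈ A` has `A^H` divisionally free with `χ(A^H,t) ∣ χ(A,t)`.
(Each restriction drops the dimension by exactly one, so `finrank M` steps suffice.) -/
def ArrIsDivFree (K : Type u) [Field K] {M : Type v} [AddCommGroup M] [Module K M]
    [FiniteDimensional K M] (A : Finset (M →ₗ[K] K)) : Prop :=
  DivFreeAux K (Module.finrank K M) M A

/-- The meet of two elements in the intersection lattice ordered by reverse inclusion:
the smallest member of `L` containing both. -/
def latticeMeet (K : Type u) [Field K] {M : Type v} [AddCommGroup M] [Module K M]
    (L : Finset (Submodule K M)) (x y : Submodule K M) : Submodule K M :=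
  (L.filter fun z => x ≤ z ∧ y ≤ z).inf id

/-- `m` is a modular element of the intersection lattice `L` (ordered by reverse
inclusion): for all `a ≤ b` in `L`, `a ∨ (m ∧ b) = (a ∨ m) ∧ b`. -/
def ModularIn (K : Type u) [Field K] {M : Type v} [AddCommGroup M] [Module K M]
    (L : Finset (Submodule K M)) (m : Submodule K M) : Prop :=
  m ∈ L ∧ ∀ a ∈ L, ∀ b ∈ L, b ≤ a →
    a ⊓ latticeMeet K L m b = latticeMeet K L (a ⊓ m) b

/-- An arrangement is supersolvable if its intersection lattice has a maximal chain of
modular elements. -/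
def ArrSupersolvable (K : Type u) [Field K] {M : Type v} [AddCommGroup M] [Module K M]
    (A : Finset (M →ₗ[K] K)) : Prop :=
  ∃ C : Set (Submodule K M),
    C ⊆ ↑(interLattice K (A.image LinearMap.ker)) ∧
    IsChain (· ≤ ·) C ∧
    (∀ C' : Set (Submodule K M),
        C' ⊆ ↑(interLattice K (A.image LinearMap.ker)) → IsChain (· ≤ ·) C' → C ⊆ C' →
          C' = C) ∧
    ∀ m ∈ C, ModularIn K (interLattice K (A.image LinearMap.ker)) m

end Arrangements

/-! A vertex `v` with two earlier neighbours `u`, `u'` closes a balanced triangle unless the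
three edges are single and of odd total sign, i.e. unless they form an induced unbalanced
triangle, which condition (II) forbids. In a complete signed graph a double edge `uu'` closes a
balanced triangle anyway, so it suffices to order the vertices so that whenever `v` has a double
edge to an earlier vertex `u`, then `u` has double edges to all other earlier vertices. A
threshold ordering of the double-edge graph, rearranged to list its dominating vertices first,
has this property. -/

namespace SignedGraph

variable {V : Type u} {G : SignedGraph V} {s : Bool} {a b c : V}

theorem EdgeAdj.symm (h : G.EdgeAdj s a b) : G.EdgeAdj s b a := by
  cases s
  exacts [h.symm, h.symm]

theorem EdgeAdj.ne (h : G.EdgeAdj s a b) : a ≠ b := by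
  cases s
  exacts [h.ne, h.ne]

theorem EdgeAdj.of_inf_adj (h : (G.pos ⊓ G.neg).Adj a b) (s : Bool) : G.EdgeAdj s a b := by
  cases s
  exacts [h.1, h.2]

theorem EdgeAdj.not_edgeAdj_not_of_not_inf_adj (h : G.EdgeAdj s a b)
    (hd : ¬ (G.pos ⊓ G.neg).Adj a b) : ¬ G.EdgeAdj (!s) a b := by
  cases s
  exacts [fun h' => hd ⟨h, h'⟩, fun h' => hd ⟨h', h⟩]

theorem edgeAdj_not_of_not_edgeAdj (hcomp : G.pos ⊔ G.neg = ⊤) (hne : a ≠ b)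
    (h : ¬ G.EdgeAdj s a b) : G.EdgeAdj (!s) a b := by
  have hab : G.pos.Adj a b ∨ G.neg.Adj a b := by
    change (G.pos ⊔ G.neg).Adj a b
    rw [hcomp]
    exact hne
  cases s
  exacts [hab.resolve_left h, hab.resolve_right h]

theorem edgeAdj_iff_of_not_edgeAdj_not (h : G.EdgeAdj s a b) (h' : ¬ G.EdgeAdj (!s) a b)
    (t : Bool) : G.EdgeAdj t a b ↔ s = t := by
  cases s <;> cases t <;> simp_all

def triangle {x y z : Bool} (hab : G.EdgeAdj x a b) (hbc : G.EdgeAdj y b c)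
    (hca : G.EdgeAdj z c a) : G.Cycle where
  n := 3
  three_le := le_rfl
  vert m := if m = 0 then a else if m = 1 then b else c
  inj i j hi hj hij := by
    have := hab.ne
    have := hbc.ne
    have := hca.ne
    interval_cases i <;> interval_cases j <;> simp_all
  sgn m := if m = 0 then x else if m = 1 then y else z
  adj i hi := by
    interval_cases i
    exacts [hab, hbc, hca]

theorem triangle_balanced_iff {x y z : Bool} (hab : G.EdgeAdj x a b) (hbc : G.EdgeAdj y b c)
    (hca : G.EdgeAdj z c a) : (triangle hab hbc hca).Balanced ↔ xor x (xor y z) = false := by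
  change Even ((Finset.range 3).filter fun m =>
    (if m = 0 then x else if m = 1 then y else z) = true).card ↔ _
  cases x <;> cases y <;> cases z <;> decide

theorem triangle_isInduced {x y z : Bool} (hab : G.EdgeAdj x a b) (hbc : G.EdgeAdj y b c)
    (hca : G.EdgeAdj z c a) (hab' : ¬ G.EdgeAdj (!x) a b) (hbc' : ¬ G.EdgeAdj (!y) b c)
    (hca' : ¬ G.EdgeAdj (!z) c a) : (triangle hab hbc hca).IsInduced := by
  have e₁ := edgeAdj_iff_of_not_edgeAdj_not hab hab'
  have e₂ := edgeAdj_iff_of_not_edgeAdj_not hbc hbc'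
  have e₃ := edgeAdj_iff_of_not_edgeAdj_not hca hca'
  have e₁' := edgeAdj_iff_of_not_edgeAdj_not hab.symm (fun h => hab' h.symm)
  have e₂' := edgeAdj_iff_of_not_edgeAdj_not hbc.symm (fun h => hbc' h.symm)
  have e₃' := edgeAdj_iff_of_not_edgeAdj_not hca.symm (fun h => hca' h.symm)
  have irrefl : ∀ t w, ¬ G.EdgeAdj t w w := fun t w h => h.ne rfl
  intro i j hi hj t
  simp only [triangle] at hi hj ⊢
  interval_cases i <;> interval_cases j <;> simp [e₁, e₂, e₃, e₁', e₂', e₃', irrefl]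

theorem NoInducedUnbalancedCycle.xor_eq_false {x y z : Bool} (hII : G.NoInducedUnbalancedCycle)
    (hab : G.EdgeAdj x a b) (hbc : G.EdgeAdj y b c) (hca : G.EdgeAdj z c a)
    (hab' : ¬ G.EdgeAdj (!x) a b) (hbc' : ¬ G.EdgeAdj (!y) b c)
    (hca' : ¬ G.EdgeAdj (!z) c a) : xor x (xor y z) = false := by
  by_contra h
  exact hII ⟨triangle hab hbc hca, triangle_isInduced hab hbc hca hab' hbc' hca',
    (triangle_balanced_iff hab hbc hca).not.mpr h⟩

theorem exists_balanced_triangle (hcomp : G.pos ⊔ G.neg = ⊤) (hII : G.NoInducedUnbalancedCycle)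
    {v u u' : V} {s' : Bool} (hne : u ≠ u')
    (hdouble : ¬ (G.pos ⊓ G.neg).Adj u u' →
      ¬ (G.pos ⊓ G.neg).Adj v u ∧ ¬ (G.pos ⊓ G.neg).Adj v u')
    (hu : G.EdgeAdj s v u) (hu' : G.EdgeAdj s' v u') :
    ∃ s'' : Bool, G.EdgeAdj s'' u u' ∧ Even ((cond s 1 0 + cond s' 1 0 + cond s'' 1 0 : ℕ)) := by
  refine ⟨xor s s', ?_, by cases s <;> cases s' <;> decide⟩
  by_contra h
  have hd : ¬ (G.pos ⊓ G.neg).Adj u u' := fun hd => h (.of_inf_adj hd _)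
  obtain ⟨hdu, hdu'⟩ := hdouble hd
  have huu' := edgeAdj_not_of_not_edgeAdj hcomp hne h
  have hxor := hII.xor_eq_false hu huu' hu'.symm (hu.not_edgeAdj_not_of_not_inf_adj hdu)
    (huu'.not_edgeAdj_not_of_not_inf_adj hd)
    (fun h' => hu'.not_edgeAdj_not_of_not_inf_adj hdu' h'.symm)
  cases s <;> cases s' <;> simp at hxor

theorem hasLinkElimOrdering_of_equiv [Fintype V] (e : Fin (Fintype.card V) ≃ V)
    (he : ∀ i j k, j < i → k < i → j ≠ k → ∀ s s', G.EdgeAdj s (e i) (e j) →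
      G.EdgeAdj s' (e i) (e k) →
      ∃ s'' : Bool, G.EdgeAdj s'' (e j) (e k) ∧
        Even ((cond s 1 0 + cond s' 1 0 + cond s'' 1 0 : ℕ))) :
    G.HasLinkElimOrdering := by
  refine ⟨e, fun i => ?_⟩
  rintro ⟨-, j, hj, rfl⟩ ⟨-, k, hk, rfl⟩ s s' hne hu hu'
  have hsub : ∀ t (w w' : {w | ∃ l, l ≤ i ∧ e l = w}),
      (G.induce _).EdgeAdj t w w' ↔ G.EdgeAdj t w w' := by
    intro t _ _
    cases t <;> rfl
  rw [hsub] at hu hu'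
  have hjk : j ≠ k := fun h => hne (by simp [h])
  have hji : j < i := lt_of_le_of_ne hj fun h => hu.ne (by simp [h])
  have hki : k < i := lt_of_le_of_ne hk fun h => hu'.ne (by simp [h])
  obtain ⟨s'', h, hpar⟩ := he i j k hji hki hjk s s' hu hu'
  exact ⟨s'', (hsub _ _ _).mpr h, hpar⟩

end SignedGraph

theorem SimpleGraph.adj_iff_of_adj_iff_of_lt {V : Type u} {n : ℕ} {D : SimpleGraph V}
    {f : Fin n → V} {P : Fin n → Prop} (hf : ∀ a b, b < a → (D.Adj (f a) (f b) ↔ P a))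
    {a b : Fin n} (hab : a ≠ b) : D.Adj (f a) (f b) ↔ b < a ∧ P a ∨ a < b ∧ P b := by
  rcases hab.lt_or_gt with hab | hba
  · simp [D.adj_comm (f a), hf b a hab, hab, hab.not_gt]
  · simp [hf a b hba, hba, hba.not_gt]

theorem SimpleGraph.IsThresholdGraph.exists_equiv_adj_of_adj {V : Type u} [Fintype V]
    {D : SimpleGraph V} (h : D.IsThresholdGraph) :
    ∃ e : Fin (Fintype.card V) ≃ V, ∀ i j k, j < i → k < i → j ≠ k →
      D.Adj (e i) (e j) → D.Adj (e j) (e k) := by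
  obtain ⟨e₀, he₀⟩ := h
  let F : Fin (Fintype.card V) → Prop := fun a => ∀ b < a, D.Adj (e₀ a) (e₀ b)
  have hF : ∀ a b, b < a → (D.Adj (e₀ a) (e₀ b) ↔ F a) := fun a b hba =>
    ⟨fun hab => (he₀ a).resolve_left fun hiso => hiso b hba hab, fun hF => hF b hba⟩
  -- dominating vertices first, each group in its original order
  let κ : Fin (Fintype.card V) → ℕ := fun a => (if F a then 0 else Fintype.card V) + a
  have hκ : Function.Injective κ := by
    intro a b hab
    simp only [κ] at hab
    split_ifs at hab <;> omega
  have hmono : StrictMono (κ ∘ Tuple.sort κ) :=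
    (Tuple.monotone_sort κ).strictMono_of_injective (hκ.comp (Tuple.sort κ).injective)
  have hκ_adj : ∀ a b c, κ b < κ a → κ c < κ a → b ≠ c →
      (b < a ∧ F a ∨ a < b ∧ F b) → (c < b ∧ F b ∨ b < c ∧ F c) := by
    intro a b c hba hca hbc hab
    have := a.isLt
    have := b.isLt
    have := c.isLt
    simp only [κ, Fin.lt_def, ne_eq, Fin.ext_iff] at hba hca hbc hab ⊢
    by_cases hFa : F a <;> by_cases hFb : F b <;> by_cases hFc : F c <;>
      simp only [hFa, hFb, hFc, if_true, if_false, and_true, and_false, or_false, false_or]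
        at hba hca hab ⊢ <;> omega
  refine ⟨(Tuple.sort κ).trans e₀, fun i j k hji hki hjk hij => ?_⟩
  have hσ := (Tuple.sort κ).injective
  rw [Equiv.trans_apply, Equiv.trans_apply,
    SimpleGraph.adj_iff_of_adj_iff_of_lt hF (hσ.ne hji.ne')] at hij
  rw [Equiv.trans_apply, Equiv.trans_apply, SimpleGraph.adj_iff_of_adj_iff_of_lt hF (hσ.ne hjk)]
  exact hκ_adj _ _ _ (hmono hji) (hmono hki) (hσ.ne hjk) hij

/-- **Proposition 4.2, (5) ⇒ (1).** Suppose the underlying simple graph `G⁺ ∪ G⁻` is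
complete, `G` satisfies condition (II) and the graph of double edges `G⁺ ∩ G⁻` is threshold.
Then `G` has a link elimination ordering. -/
theorem link_elim_of_threshold {V : Type} [Fintype V] (G : SignedGraph V)
    (hcomp : G.pos ⊔ G.neg = ⊤)
    (hII : G.NoInducedUnbalancedCycle)
    (hth : (G.pos ⊓ G.neg).IsThresholdGraph) :
    G.HasLinkElimOrdering := by
  obtain ⟨e, he⟩ := hth.exists_equiv_adj_of_adj
  refine SignedGraph.hasLinkElimOrdering_of_equiv e fun i j k hj hk hjk s s' hu hu' => ?_
  refine SignedGraph.exists_balanced_triangle hcomp hII (e.injective.ne hjk) (fun hd => ?_) hu hu'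
  exact ⟨fun h => hd (he i j k hj hk hjk h), fun h => hd (he i k j hk hj hjk.symm h).symm⟩
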